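/- Let τ ∈ ℂ with Re τ < 0. Then the *-Hermite polynomials are orthogonal on the real line with respect to the weight e^{w²/τ}: for all n, m ≥ 0, ∫_{−∞}^{∞} e^{w²/τ} H_n(w,τ) H_m(w,τ) dw = 0 if n ≠ m, and ∫_{−∞}^{∞} e^{w²/τ} H_n(w,τ)² dw = n! (−τ)^n √(−τ) √π, where √(−τ) is the principal square root (defined since Re(−τ) > 0). -/

import Mathlib

open Complex MeasureTheory

/-- The `*`-Hermite polynomial `H_n(w,τ) = (d/dt)^n|_{t=0} e^{(τ/2)t² + √2 t w}`. -/
noncomputable def starHermite (n : ℕ) (τ w : ℂ) : ℂ :=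
  iteratedDeriv n (fun t : ℂ =>
    Complex.exp (τ / 2 * t ^ 2 + (Real.sqrt 2 : ℂ) * t * w)) 0

/-!
Write `φ(w) = e^{w²/τ}` and `c = τ/√2`. Completing the square,
`φ(w) e^{(τ/2)t² + √2 t w} = φ(w + c t)`, so differentiating `n` times in `t` at `0` gives the
Rodrigues formula `φ H_n = c^n φ^{(n)}`. Differentiating it once more yields
`H_{n+1} = √2 w H_n + c H_n'`, so `H_n` is a polynomial of degree `n` with leading coefficient
`√2^n`. Integrating by parts `n` times (the boundary terms vanish because `φ` decays like a
Gaussian), `∫ φ H_n H_m = (-c)^n ∫ φ H_m^{(n)}`, which is `0` for `m < n` and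
`(-c)^n n! √2^n ∫ φ = n! (-τ)^n √(-τ) √π` for `m = n`.
-/

open Polynomial

lemma Polynomial.iterate_derivative_eq_C_of_natDegree_le {R : Type*} [Semiring R] {p : R[X]}
    {n : ℕ} (h : p.natDegree ≤ n) : derivative^[n] p = C (n.factorial * p.coeff n) := by
  rw [eq_C_of_natDegree_le_zero ((natDegree_iterate_derivative p n).trans (by omega)),
    coeff_iterate_derivative, zero_add, Nat.descFactorial_self, nsmul_eq_mul]

lemma Complex.ofReal_mul_cpow {r : ℝ} (hr : 0 < r) {z : ℂ} (hz : z ≠ 0) (w : ℂ) :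
    ((r : ℂ) * z) ^ w = (r : ℂ) ^ w * z ^ w := by
  have hr' : (r : ℂ) ≠ 0 := ofReal_ne_zero.2 hr.ne'
  rw [cpow_def_of_ne_zero (mul_ne_zero hr' hz), log_ofReal_mul hr hz, ofReal_log hr.le, add_mul,
    Complex.exp_add, ← cpow_def_of_ne_zero hr', ← cpow_def_of_ne_zero hz]

lemma Complex.neg_inv_re_pos {τ : ℂ} (hτ : τ.re < 0) : 0 < (-τ⁻¹).re := by
  rw [neg_re, inv_re, neg_pos]
  exact div_neg_of_neg_of_pos hτ (normSq_pos.2 fun h => by simp [h] at hτ)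

lemma Complex.ofReal_sqrt_two_sq : ((√2 : ℝ) : ℂ) ^ 2 = 2 := by
  rw [← ofReal_pow, Real.sq_sqrt zero_le_two]
  norm_num

lemma integrable_pow_mul_cexp_neg_mul_sq {b : ℂ} (hb : 0 < b.re) (n : ℕ) :
    Integrable fun x : ℝ => (x : ℂ) ^ n * cexp (-b * (x : ℂ) ^ 2) := by
  refine ⟨by fun_prop, ?_⟩
  have := (integrable_rpow_mul_exp_neg_mul_sq hb (s := n)
    (by linarith [n.cast_nonneg (α := ℝ)])).hasFiniteIntegral
  rw [← hasFiniteIntegral_norm_iff] at this ⊢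
  convert this using 2 with x
  rw [norm_mul, norm_mul, norm_cexp_neg_mul_sq, Real.rpow_natCast, norm_pow, norm_pow,
    norm_real, Real.norm_of_nonneg (Real.exp_pos _).le]

lemma integrable_cexp_neg_mul_sq_mul_eval {b : ℂ} (hb : 0 < b.re) (p : ℂ[X]) :
    Integrable fun x : ℝ => cexp (-b * (x : ℂ) ^ 2) * p.eval (x : ℂ) := by
  induction p using Polynomial.induction_on' with
  | add p q hp hq => simpa only [eval_add, mul_add] using hp.fun_add hq
  | monomial n a =>
    simpa only [eval_monomial, mul_comm, mul_left_comm, mul_assoc]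
      using (integrable_pow_mul_cexp_neg_mul_sq hb n).const_mul a

noncomputable def hermiteWeight (τ z : ℂ) : ℂ := cexp (z ^ 2 / τ)

lemma hermiteWeight_eq_cexp_neg_mul_sq (τ z : ℂ) :
    hermiteWeight τ z = cexp (-(-τ⁻¹) * z ^ 2) := by
  rw [hermiteWeight, neg_neg, div_eq_inv_mul]

lemma contDiff_hermiteWeight (τ : ℂ) {n : WithTop ℕ∞} :
    ContDiff ℂ n (hermiteWeight τ) := by
  unfold hermiteWeight
  fun_prop

lemma hasDerivAt_hermiteWeight (τ z : ℂ) :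
    HasDerivAt (hermiteWeight τ) (2 * z / τ * hermiteWeight τ z) z := by
  refine ((hasDerivAt_pow 2 z).div_const τ).cexp.congr_deriv ?_
  simp only [hermiteWeight]
  push_cast
  ring

lemma hasDerivAt_iteratedDeriv_hermiteWeight (τ : ℂ) (n : ℕ) (z : ℂ) :
    HasDerivAt (iteratedDeriv n (hermiteWeight τ))
      (iteratedDeriv (n + 1) (hermiteWeight τ) z) z := by
  rw [iteratedDeriv_succ]
  exact ((contDiff_hermiteWeight τ (n := ⊤)).differentiable_iteratedDeriv n
    (by exact_mod_cast WithTop.coe_lt_top _) z).hasDerivAt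

lemma hermiteWeight_mul_starHermite {τ : ℂ} (hτ : τ ≠ 0) (n : ℕ) (w : ℂ) :
    hermiteWeight τ w * starHermite n τ w
      = (τ / (√2 : ℝ)) ^ n * iteratedDeriv n (hermiteWeight τ) w := by
  have hsquare : ∀ t, hermiteWeight τ w * cexp (τ / 2 * t ^ 2 + (√2 : ℝ) * t * w)
      = hermiteWeight τ (w + τ / (√2 : ℝ) * t) := fun t => by
    have : ((√2 : ℝ) : ℂ) ≠ 0 := by norm_num
    rw [hermiteWeight, hermiteWeight, ← Complex.exp_add]
    congr 1
    field_simp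
    linear_combination (τ ^ 2 * t ^ 2 + 2 * (√2 : ℝ) * w * τ * t) * ofReal_sqrt_two_sq
  calc hermiteWeight τ w * starHermite n τ w
      = iteratedDeriv n
          (fun t => hermiteWeight τ w * cexp (τ / 2 * t ^ 2 + (√2 : ℝ) * t * w)) 0 :=
        (iteratedDeriv_const_mul_field _ _).symm
    _ = iteratedDeriv n (fun t => hermiteWeight τ (w + τ / (√2 : ℝ) * t)) 0 := by
        simp_rw [hsquare]
    _ = (τ / (√2 : ℝ)) ^ n * iteratedDeriv n (hermiteWeight τ) w := by
        rw [iteratedDeriv_comp_const_mul (f := fun s => hermiteWeight τ (w + s))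
          ((contDiff_hermiteWeight τ).comp (contDiff_const.add contDiff_id)),
          iteratedDeriv_comp_const_add]
        simp

noncomputable def starHermitePoly (τ : ℂ) : ℕ → ℂ[X]
  | 0 => 1
  | n + 1 => C ((√2 : ℝ) : ℂ) * X * starHermitePoly τ n
      + C (τ / (√2 : ℝ)) * derivative (starHermitePoly τ n)

lemma starHermite_eq_eval {τ : ℂ} (hτ : τ ≠ 0) (n : ℕ) (w : ℂ) :
    starHermite n τ w = (starHermitePoly τ n).eval w := by
  induction n generalizing w with
  | zero => simp [starHermite, starHermitePoly]
  | succ n ih =>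
    set p := starHermitePoly τ n
    have hrodrigues : (fun z => hermiteWeight τ z * p.eval z)
        = fun z => (τ / (√2 : ℝ)) ^ n * iteratedDeriv n (hermiteWeight τ) z := by
      funext z
      rw [← ih, hermiteWeight_mul_starHermite hτ]
    have hderiv := (hasDerivAt_hermiteWeight τ w).fun_mul (p.hasDerivAt w)
    rw [hrodrigues] at hderiv
    have hderiv_eq := hderiv.unique ((hasDerivAt_iteratedDeriv_hermiteWeight τ n w).const_mul _)
    refine mul_left_cancel₀ (a := hermiteWeight τ w) (Complex.exp_ne_zero _) ?_
    rw [hermiteWeight_mul_starHermite hτ, pow_succ', mul_assoc, ← hderiv_eq]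
    simp only [p, starHermitePoly, eval_add, eval_mul, eval_C, eval_X]
    field_simp
    linear_combination -(hermiteWeight τ w * w * p.eval w) * ofReal_sqrt_two_sq

lemma natDegree_starHermitePoly_le (τ : ℂ) (n : ℕ) :
    (starHermitePoly τ n).natDegree ≤ n := by
  induction n with
  | zero => simp [starHermitePoly]
  | succ n ih =>
    refine natDegree_add_le_of_degree_le ?_ ?_
    · rw [mul_assoc]
      refine (natDegree_C_mul_le _ _).trans ((natDegree_mul_le).trans ?_)
      rw [natDegree_X]
      omega
    · refine (natDegree_C_mul_le _ _).trans ((natDegree_derivative_le _).trans ?_)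
      omega

lemma coeff_starHermitePoly_self (τ : ℂ) (n : ℕ) :
    (starHermitePoly τ n).coeff n = ((√2 : ℝ) : ℂ) ^ n := by
  induction n with
  | zero => simp [starHermitePoly]
  | succ n ih =>
    have hvanish : (starHermitePoly τ n).coeff (n + 2) = 0 :=
      coeff_eq_zero_of_natDegree_lt ((natDegree_starHermitePoly_le τ n).trans_lt (by omega))
    simp [starHermitePoly, mul_assoc, coeff_derivative, ih, hvanish, pow_succ']

lemma iteratedDeriv_hermiteWeight {τ : ℂ} (hτ : τ ≠ 0) (n : ℕ) (z : ℂ) :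
    iteratedDeriv n (hermiteWeight τ) z
      = hermiteWeight τ z * (C (((√2 : ℝ) / τ) ^ n) * starHermitePoly τ n).eval z := by
  have hc : τ / ((√2 : ℝ) : ℂ) ≠ 0 := div_ne_zero hτ (by norm_num)
  rw [eval_mul, eval_C, ← starHermite_eq_eval hτ, mul_left_comm,
    hermiteWeight_mul_starHermite hτ, ← mul_assoc, ← mul_pow, ← inv_div, inv_mul_cancel₀ hc,
    one_pow, one_mul]

lemma integrable_hermiteWeight_mul_eval {τ : ℂ} (hτ : τ.re < 0) (p : ℂ[X]) :
    Integrable fun x : ℝ => hermiteWeight τ x * p.eval (x : ℂ) := by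
  simpa only [hermiteWeight_eq_cexp_neg_mul_sq]
    using integrable_cexp_neg_mul_sq_mul_eval (neg_inv_re_pos hτ) p

lemma integrable_eval_mul_iteratedDeriv_hermiteWeight {τ : ℂ} (hτ : τ.re < 0) (p : ℂ[X])
    (n : ℕ) :
    Integrable fun x : ℝ => p.eval (x : ℂ) * iteratedDeriv n (hermiteWeight τ) x := by
  have hτ0 : τ ≠ 0 := fun h => by simp [h] at hτ
  simpa only [iteratedDeriv_hermiteWeight hτ0, eval_mul, mul_comm, mul_left_comm]
    using integrable_hermiteWeight_mul_eval hτ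
      ((C (((√2 : ℝ) / τ) ^ n) * starHermitePoly τ n) * p)

lemma integral_eval_mul_iteratedDeriv_hermiteWeight {τ : ℂ} (hτ : τ.re < 0) (n : ℕ)
    (p : ℂ[X]) :
    ∫ x : ℝ, p.eval (x : ℂ) * iteratedDeriv n (hermiteWeight τ) x
      = (-1) ^ n * ∫ x : ℝ, (derivative^[n] p).eval (x : ℂ) * hermiteWeight τ x := by
  induction n generalizing p with
  | zero => simp
  | succ n ih =>
    calc ∫ x : ℝ, p.eval (x : ℂ) * iteratedDeriv (n + 1) (hermiteWeight τ) x
        = -∫ x : ℝ, (derivative p).eval (x : ℂ) * iteratedDeriv n (hermiteWeight τ) x :=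
          integral_mul_deriv_eq_deriv_mul_of_integrable
            (fun x _ => (p.hasDerivAt x).comp_ofReal)
            (fun x _ => (hasDerivAt_iteratedDeriv_hermiteWeight τ n x).comp_ofReal)
            (integrable_eval_mul_iteratedDeriv_hermiteWeight hτ p (n + 1))
            (integrable_eval_mul_iteratedDeriv_hermiteWeight hτ (derivative p) n)
            (integrable_eval_mul_iteratedDeriv_hermiteWeight hτ p n)
      _ = (-1) ^ (n + 1)
            * ∫ x : ℝ, (derivative^[n + 1] p).eval (x : ℂ) * hermiteWeight τ x := by
          rw [ih, Function.iterate_succ_apply, pow_succ]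
          ring

lemma integral_hermiteWeight {τ : ℂ} (hτ : τ.re < 0) :
    ∫ x : ℝ, hermiteWeight τ x = (-τ) ^ (1 / 2 : ℂ) * (√Real.pi : ℝ) := by
  have hτ0 : τ ≠ 0 := fun h => by simp [h] at hτ
  have hsqrt : (Real.pi : ℂ) ^ (1 / 2 : ℂ) = (√Real.pi : ℝ) := by
    rw [Real.sqrt_eq_rpow, ofReal_cpow Real.pi_pos.le]
    norm_num
  simp_rw [hermiteWeight_eq_cexp_neg_mul_sq]
  rw [integral_gaussian_complex (neg_inv_re_pos hτ), div_neg, div_inv_eq_mul, ← mul_neg,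
    ofReal_mul_cpow Real.pi_pos (neg_ne_zero.2 hτ0), hsqrt, mul_comm]

lemma integral_starHermite_mul_starHermite {τ : ℂ} (hτ : τ.re < 0) (n m : ℕ) :
    ∫ x : ℝ, cexp ((x : ℂ) ^ 2 / τ) * starHermite n τ x * starHermite m τ x
      = (-(τ / (√2 : ℝ))) ^ n
          * ∫ x : ℝ, (derivative^[n] (starHermitePoly τ m)).eval (x : ℂ)
              * hermiteWeight τ x := by
  have hτ0 : τ ≠ 0 := fun h => by simp [h] at hτ
  have hrodrigues : ∀ x : ℝ, cexp ((x : ℂ) ^ 2 / τ) * starHermite n τ x * starHermite m τ x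
      = (τ / (√2 : ℝ)) ^ n
          * ((starHermitePoly τ m).eval (x : ℂ) * iteratedDeriv n (hermiteWeight τ) x) := by
    intro x
    rw [starHermite_eq_eval hτ0 m, ← hermiteWeight, hermiteWeight_mul_starHermite hτ0]
    ring
  simp_rw [hrodrigues, integral_const_mul, integral_eval_mul_iteratedDeriv_hermiteWeight hτ]
  ring

/-- Orthogonality of the `*`-Hermite polynomials on `ℝ` with weight `e^{w²/τ}`
for `Re τ < 0`: `∫ e^{w²/τ} H_n H_m dw = 0` for `n ≠ m`, and
`∫ e^{w²/τ} H_n² dw = n! (−τ)^n √(−τ) √π` with the principal square root. -/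
theorem starHermite_orthogonal (τ : ℂ) (hτ : τ.re < 0) :
    (∀ n m : ℕ, n ≠ m →
      (∫ x : ℝ, Complex.exp ((x : ℂ) ^ 2 / τ) * starHermite n τ x * starHermite m τ x)
        = 0) ∧
    (∀ n : ℕ,
      (∫ x : ℝ, Complex.exp ((x : ℂ) ^ 2 / τ) * starHermite n τ x ^ 2)
        = (n.factorial : ℂ) * (-τ) ^ n * (-τ) ^ (1 / 2 : ℂ) *
            (Real.sqrt Real.pi : ℂ)) := by
  refine ⟨fun n m hnm => ?_, fun n => ?_⟩
  · wlog hmn : m < n generalizing n m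
    · simpa only [mul_right_comm] using this m n hnm.symm (by omega)
    rw [integral_starHermite_mul_starHermite hτ, iterate_derivative_eq_zero
      ((natDegree_starHermitePoly_le τ m).trans_lt hmn)]
    simp
  · have hsq : ∀ x : ℝ, cexp ((x : ℂ) ^ 2 / τ) * starHermite n τ x ^ 2
        = cexp ((x : ℂ) ^ 2 / τ) * starHermite n τ x * starHermite n τ x := fun x => by ring
    have hpow : (-(τ / (√2 : ℝ))) ^ n * ((√2 : ℝ) : ℂ) ^ n = (-τ) ^ n := by
      rw [← mul_pow, neg_mul, div_mul_cancel₀ τ (by norm_num)]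
    rw [integral_congr_ae (ae_of_all _ hsq), integral_starHermite_mul_starHermite hτ,
      iterate_derivative_eq_C_of_natDegree_le (natDegree_starHermitePoly_le τ n),
      coeff_starHermitePoly_self]
    simp_rw [eval_C, integral_const_mul, integral_hermiteWeight hτ]
    linear_combination ((n.factorial : ℂ) * (-τ) ^ (1 / 2 : ℂ) * (√Real.pi : ℝ)) * hpow
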